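/- arXiv:math-ph/0507064 — 2 statements merged into one kernel-verified Lean document; each statement's English description precedes it below -/
import Mathlib

section
/- Let M ≥ 0, α ∈ ℝ, and f, g : ℝ → ℝ. Assume that B ↦ f(B) − M·B² is concave on ℝ, so that the one-sided derivatives f'₊(B) and f'₋(B) exist at every B ∈ ℝ. Assume that for every ε ∈ (−1,1) one has g(β+ε) − g(β) → 0 as β → +∞, and that f(B) − (α·B + g(B)) → 0 as B → +∞. Then f'₊(B) → α and f'₋(B) → α as B → +∞. -/
open MeasureTheory Filter Set Topology

noncomputable section

namespace SC

/-- The plane `ℝ²`. -/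
abbrev Plane := ℝ × ℝ

/-- Squared Euclidean norm on the plane. -/
def esq (v : Plane) : ℝ := v.1 ^ 2 + v.2 ^ 2

/-- Euclidean dot product on the plane. -/
def dot2 (v w : Plane) : ℝ := v.1 * w.1 + v.2 * w.2

/-- The reference vector potential `F₀(x) = (-x₂/2, x₁/2)`, with `curl F₀ = 1`. -/
def F0 : Plane → Plane := fun x => (-x.2 / 2, x.1 / 2)

/-- `u` is of class `Cⁿ` on a neighborhood of the closure of `Ω`. -/
def CNearCl {E : Type*} [NormedAddCommGroup E] [NormedSpace ℝ E]
    (n : ℕ) (Ω : Set Plane) (u : Plane → E) : Prop :=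
  ∃ U : Set Plane, IsOpen U ∧ closure Ω ⊆ U ∧ ContDiffOn ℝ n u U

/-- The pointwise squared magnetic gradient `|(-i∇ - B·A)u|²`. -/
def magSq (B : ℝ) (A : Plane → Plane) (u : Plane → ℂ) (x : Plane) : ℝ :=
  ‖(-Complex.I) * fderiv ℝ u x ((1 : ℝ), (0 : ℝ)) - ((B * (A x).1 : ℝ) : ℂ) * u x‖ ^ 2 +
  ‖(-Complex.I) * fderiv ℝ u x ((0 : ℝ), (1 : ℝ)) - ((B * (A x).2 : ℝ) : ℂ) * u x‖ ^ 2

/-- `curl A = ∂₁A₂ - ∂₂A₁`. -/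
def curl2 (A : Plane → Plane) (x : Plane) : ℝ :=
  fderiv ℝ (fun y => (A y).2) x ((1 : ℝ), (0 : ℝ)) -
    fderiv ℝ (fun y => (A y).1) x ((0 : ℝ), (1 : ℝ))

/-- The variational ground state energy `λ₁(B·A)` of the magnetic Neumann Laplacian. -/
def lam1A (Ω : Set Plane) (B : ℝ) (A : Plane → Plane) : ℝ :=
  sInf { r : ℝ | ∃ u : Plane → ℂ, CNearCl 1 Ω u ∧ (∫ x in Ω, ‖u x‖ ^ 2) ≠ 0 ∧
    r = (∫ x in Ω, magSq B A u x) / (∫ x in Ω, ‖u x‖ ^ 2) }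

/-- `λ₁(B) = λ₁(B·F₀)`. -/
def lam1 (Ω : Set Plane) (B : ℝ) : ℝ := lam1A Ω B F0

/-- The Ginzburg–Landau energy functional. -/
def GLenergy (Ω : Set Plane) (κ H : ℝ) (ψ : Plane → ℂ) (A : Plane → Plane) : ℝ :=
  ∫ x in Ω, (magSq (κ * H) A ψ x - κ ^ 2 * ‖ψ x‖ ^ 2 + κ ^ 2 / 2 * ‖ψ x‖ ^ 4
    + κ ^ 2 * H ^ 2 * (curl2 A x - 1) ^ 2)

/-- Admissible Ginzburg–Landau configurations. -/
def GLadm (Ω : Set Plane) (ψ : Plane → ℂ) (A : Plane → Plane) : Prop :=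
  CNearCl 1 Ω ψ ∧ CNearCl 1 Ω A

/-- The normal state is a minimizer at `(κ, H)`. -/
def NormalMin (Ω : Set Plane) (κ H : ℝ) : Prop :=
  ∀ ψ A, GLadm Ω ψ A → 0 ≤ GLenergy Ω κ H ψ A

/-- The normal state is the unique minimizer at `(κ, H)`. -/
def NormalUnique (Ω : Set Plane) (κ H : ℝ) : Prop :=
  NormalMin Ω κ H ∧
  ∀ ψ A, GLadm Ω ψ A → (∫ x in Ω, ‖ψ x‖ ^ 2) ≠ 0 → 0 < GLenergy Ω κ H ψ A

/-- `(ψ, A)` is a minimizer of the Ginzburg–Landau energy at `(κ, H)`. -/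
def IsGLMin (Ω : Set Plane) (κ H : ℝ) (ψ : Plane → ℂ) (A : Plane → Plane) : Prop :=
  GLadm Ω ψ A ∧ ∀ ψ' A', GLadm Ω ψ' A' → GLenergy Ω κ H ψ A ≤ GLenergy Ω κ H ψ' A'

/-- Lower global critical field. -/
def HC3low (Ω : Set Plane) (κ : ℝ) : ℝ := sInf {H : ℝ | 0 < H ∧ NormalMin Ω κ H}

/-- Upper global critical field. -/
def HC3up (Ω : Set Plane) (κ : ℝ) : ℝ :=
  sInf {H : ℝ | 0 < H ∧ ∀ H', H < H' → NormalUnique Ω κ H'}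

/-- Lower local critical field. -/
def HlocLow (Ω : Set Plane) (κ : ℝ) : ℝ :=
  sInf {H : ℝ | 0 < H ∧ κ ^ 2 ≤ lam1 Ω (κ * H)}

/-- Upper local critical field. -/
def HlocUp (Ω : Set Plane) (κ : ℝ) : ℝ :=
  sInf {H : ℝ | 0 < H ∧ ∀ H', H < H' → κ ^ 2 ≤ lam1 Ω (κ * H')}

/-- The inward unit normal `ν(s) = (-γ₂'(s), γ₁'(s))`. -/
def nuVec (γ : ℝ → Plane) (s : ℝ) : Plane := (-(deriv γ s).2, (deriv γ s).1)

/-- The curvature `k(s) = ⟨γ''(s), ν(s)⟩`. -/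
def curvOf (γ : ℝ → Plane) (s : ℝ) : ℝ := dot2 (deriv (deriv γ) s) (nuVec γ s)

/-- The maximal curvature. -/
def kmaxOf (γ : ℝ → Plane) : ℝ := sSup (Set.range (curvOf γ))

/-- A smooth counterclockwise arclength parametrization of the boundary of `Ω`. -/
structure BoundaryParam (Ω : Set Plane) where
  γ : ℝ → Plane
  L : ℝ
  L_pos : 0 < L
  smooth : ContDiff ℝ (⊤ : ℕ∞) γ
  periodic : Function.Periodic γ L
  unit_speed : ∀ s, esq (deriv γ s) = 1
  injOn : Set.InjOn γ (Set.Ico 0 L)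
  range_eq : Set.range γ = frontier Ω
  inward : ∀ s, ∃ ε > 0, ∀ t ∈ Set.Ioo (0 : ℝ) ε, γ s + t • nuVec γ s ∈ Ω

/-- The non-degeneracy assumption: finitely many points of maximal curvature,
all of them non-degenerate maxima. -/
def NonDegen {Ω : Set Plane} (P : BoundaryParam Ω) : Prop :=
  ∃ (N : ℕ) (s : Fin N → ℝ), 0 < N ∧ (∀ j, s j ∈ Set.Ico 0 P.L) ∧
    (∀ j, curvOf P.γ (s j) = kmaxOf P.γ) ∧
    (∀ t ∈ Set.Ico 0 P.L, (∀ j, t ≠ s j) → curvOf P.γ t < kmaxOf P.γ) ∧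
    (∀ j, deriv (deriv (curvOf P.γ)) (s j) < 0)

/-- The ground state energy `μ(ζ)` of the de Gennes half-line model operator. -/
def muGen (ζ : ℝ) : ℝ :=
  sInf { r : ℝ | ∃ φ : ℝ → ℝ, ContDiff ℝ 1 φ ∧ HasCompactSupport φ ∧
    (∃ τ, 0 < τ ∧ φ τ ≠ 0) ∧
    r = (∫ τ in Set.Ioi (0 : ℝ), ((deriv φ τ) ^ 2 + (τ + ζ) ^ 2 * (φ τ) ^ 2)) /
        (∫ τ in Set.Ioi (0 : ℝ), (φ τ) ^ 2) }

/-- The de Gennes constant `Θ₀`. -/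
def Theta0 : ℝ := sInf (Set.range muGen)

/-- Standard facts about the de Gennes constant, taken as hypotheses. -/
structure DeGennes where
  ξ₀ : ℝ
  u₀ : ℝ → ℝ
  theta_lb : 1 / 2 < Theta0
  theta_ub : Theta0 < 1
  ξ₀_mem : ξ₀ ∈ Set.Ioo (-1 : ℝ) 0
  ξ₀_min : muGen ξ₀ = Theta0
  ξ₀_uniq : ∀ ζ, muGen ζ = Theta0 → ζ = ξ₀
  ξ₀_sq : ξ₀ ^ 2 = Theta0
  u₀_pos : ∀ τ, 0 ≤ τ → 0 < u₀ τ
  u₀_smooth : ContDiffOn ℝ 2 u₀ (Set.Ici 0)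
  u₀_sq_int : IntegrableOn (fun τ => (u₀ τ) ^ 2) (Set.Ioi 0)
  u₀_normalized : (∫ τ in Set.Ioi (0 : ℝ), (u₀ τ) ^ 2) = 1
  u₀_neumann : derivWithin u₀ (Set.Ici 0) 0 = 0
  u₀_ode : ∀ τ ∈ Set.Ioi (0 : ℝ),
    -(deriv (deriv u₀) τ) + (τ + ξ₀) ^ 2 * u₀ τ = Theta0 * u₀ τ

/-- The universal constant `C₁ = u₀(0)²/3`. -/
def DeGennes.C1 (D : DeGennes) : ℝ := (D.u₀ 0) ^ 2 / 3

/-- Condition (★) on a vector field `A` at field strength `B` with constant `C₀`. -/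
def StarCond (Ω : Set Plane) (C₀ B : ℝ) (A : Plane → Plane) : Prop :=
  CNearCl 2 Ω A ∧
  (∀ x ∈ closure Ω, ‖A x‖ ≤ C₀) ∧
  (∀ x ∈ closure Ω, ‖fderiv ℝ A x‖ ≤ C₀) ∧
  (∀ x ∈ closure Ω, ‖fderiv ℝ (fderiv ℝ A) x‖ ≤ C₀) ∧
  (∀ x ∈ closure Ω, |curl2 A x - 1| ≤ C₀ * B ^ (-(1 : ℝ) / 4)) ∧
  (∀ x ∈ closure Ω, ‖fderiv ℝ (curl2 A) x‖ ≤ C₀ * B ^ (-(1 : ℝ) / 4)) ∧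
  (∀ x ∈ frontier Ω, curl2 A x = 1)

/-- The open unit disc. -/
def unitDisc : Set Plane := {x : Plane | x.1 ^ 2 + x.2 ^ 2 < 1}

/-- `Δ_B`: distance from `B/2 + ξ₀√B + δ₀` to the nearest integer. -/
def DeltaB (ξ₀ δ₀ B : ℝ) : ℝ :=
  sInf (Set.range (fun m : ℤ => |(m : ℝ) - B / 2 - ξ₀ * Real.sqrt B - δ₀|))

/-- Euclidean distance to the boundary of `Ω`. -/
def distBdry (Ω : Set Plane) (x : Plane) : ℝ :=
  sInf ((fun y => Real.sqrt (esq (x - y))) '' frontier Ω)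

end SC

/-!
Write `f = h + M B²` with `h` concave. Concavity of `h` squeezes both one-sided derivatives of `f`
at `B` between the secant slopes of `f` over `[B, B + ε]` and `[B - ε, B]`, up to an error `M ε`.
Every secant slope of fixed width `ε ∈ (-1, 1)` tends to `α`, because `f` is `α B + g B` up to
`o(1)` and `g` has vanishing increments of width `ε`; letting `ε → 0` gives the claim.
-/

lemma ConcaveOn.rightDeriv_le_leftDeriv_of_mem_interior {S : Set ℝ} {h : ℝ → ℝ} {x : ℝ}
    (hh : ConcaveOn ℝ S h) (hx : x ∈ interior S) :
    derivWithin h (Ioi x) x ≤ derivWithin h (Iio x) x := by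
  simpa [derivWithin.neg] using hh.neg.leftDeriv_le_rightDeriv_of_mem_interior hx

lemma ConcaveOn.differentiableWithinAt_Ioi_of_mem_interior {S : Set ℝ} {h : ℝ → ℝ} {x : ℝ}
    (hh : ConcaveOn ℝ S h) (hx : x ∈ interior S) :
    DifferentiableWithinAt ℝ h (Ioi x) x := by
  simpa using (hh.neg.differentiableWithinAt_Ioi_of_mem_interior hx).neg

lemma ConcaveOn.differentiableWithinAt_Iio_of_mem_interior {S : Set ℝ} {h : ℝ → ℝ} {x : ℝ}
    (hh : ConcaveOn ℝ S h) (hx : x ∈ interior S) :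
    DifferentiableWithinAt ℝ h (Iio x) x := by
  simpa using (hh.neg.differentiableWithinAt_Iio_of_mem_interior hx).neg

lemma slope_sub_const_mul_sq (f : ℝ → ℝ) (M : ℝ) {x y : ℝ} (hxy : x ≠ y) :
    slope (fun t => f t - M * t ^ 2) x y = slope f x y - M * (x + y) := by
  have : y - x ≠ 0 := sub_ne_zero.2 hxy.symm
  simp only [slope_def_field]
  field_simp
  ring

lemma tendsto_of_squeeze_with_linear_error {ι : Type*} {l : Filter ι} {D : ι → ℝ}
    {L U : ℝ → ι → ℝ} {M α : ℝ}
    (hL : ∀ ε ∈ Ioo (0 : ℝ) 1, Tendsto (L ε) l (𝓝 α))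
    (hU : ∀ ε ∈ Ioo (0 : ℝ) 1, Tendsto (U ε) l (𝓝 α))
    (hD : ∀ ε ∈ Ioo (0 : ℝ) 1, ∀ i, D i ∈ Icc (L ε i - M * ε) (U ε i + M * ε)) :
    Tendsto D l (𝓝 α) := by
  have hsmall : Tendsto (fun ε => M * ε) (𝓝[>] 0) (𝓝 0) := by
    simpa using ((continuous_const_mul M).tendsto 0).mono_left nhdsWithin_le_nhds
  have hIoo : ∀ᶠ ε in 𝓝[>] (0 : ℝ), ε ∈ Ioo 0 1 := Ioo_mem_nhdsGT zero_lt_one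
  rw [tendsto_order]
  constructor
  · intro a ha
    obtain ⟨ε, hε, haε⟩ := (hIoo.and ((hsmall.const_add a).eventually
      (gt_mem_nhds (by simpa using ha)))).exists
    filter_upwards [(hL ε hε).eventually (lt_mem_nhds haε)] with i hi
    linarith [(hD ε hε i).1]
  · intro a ha
    obtain ⟨ε, hε, haε⟩ := (hIoo.and ((hsmall.const_sub a).eventually
      (lt_mem_nhds (by simpa using ha)))).exists
    filter_upwards [(hU ε hε).eventually (gt_mem_nhds haε)] with i hi
    linarith [(hD ε hε i).2]

lemma tendsto_slope_add_atTop {f g : ℝ → ℝ} {α ε : ℝ} (hε : ε ≠ 0)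
    (hg : Tendsto (fun β => g (β + ε) - g β) atTop (𝓝 0))
    (hf : Tendsto (fun B => f B - (α * B + g B)) atTop (𝓝 0)) :
    Tendsto (fun x => slope f x (x + ε)) atTop (𝓝 α) := by
  have hshift := hf.comp (tendsto_atTop_add_const_right atTop ε tendsto_id)
  have := (((hshift.sub hf).add hg).div_const ε).const_add α
  simp only [sub_zero, add_zero, zero_div] at this
  refine this.congr fun x => ?_
  simp only [slope_def_field, Function.comp_apply, id, add_sub_cancel_left]
  field_simp
  ring

section SemiconcaveOneSidedDeriv

variable {f : ℝ → ℝ} {M : ℝ}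

lemma HasDerivWithinAt.of_sub_const_mul_sq {s : Set ℝ} {x d : ℝ}
    (hd : HasDerivWithinAt (fun t => f t - M * t ^ 2) d s x) :
    HasDerivWithinAt f (d + M * (2 * x)) s x := by
  have hsq : HasDerivWithinAt (fun t => M * t ^ 2) (M * (2 * x)) s x := by
    simpa using ((hasDerivAt_pow 2 x).const_mul M).hasDerivWithinAt
  simpa using hd.fun_add hsq

lemma hasDerivWithinAt_Ici_of_concaveOn_sub_sq (hf : ConcaveOn ℝ univ fun t => f t - M * t ^ 2)
    (x : ℝ) :
    HasDerivWithinAt f (derivWithin (fun t => f t - M * t ^ 2) (Ioi x) x + M * (2 * x))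
      (Ici x) x :=
  (hf.differentiableWithinAt_Ioi_of_mem_interior (by simp)).hasDerivWithinAt
    |>.of_sub_const_mul_sq.Ici_of_Ioi

lemma hasDerivWithinAt_Iic_of_concaveOn_sub_sq (hf : ConcaveOn ℝ univ fun t => f t - M * t ^ 2)
    (x : ℝ) :
    HasDerivWithinAt f (derivWithin (fun t => f t - M * t ^ 2) (Iio x) x + M * (2 * x))
      (Iic x) x :=
  (hf.differentiableWithinAt_Iio_of_mem_interior (by simp)).hasDerivWithinAt
    |>.of_sub_const_mul_sq.Iic_of_Iio

lemma oneSidedDeriv_mem_Icc_of_concaveOn_sub_sq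
    (hf : ConcaveOn ℝ univ fun t => f t - M * t ^ 2) (x : ℝ) {ε : ℝ} (hε : 0 < ε) :
    derivWithin f (Ici x) x ∈ Icc (slope f x (x + ε) - M * ε) (slope f (x - ε) x + M * ε) ∧
      derivWithin f (Iic x) x ∈
        Icc (slope f x (x + ε) - M * ε) (slope f (x - ε) x + M * ε) := by
  set h := fun t => f t - M * t ^ 2
  have hright : slope h x (x + ε) ≤ derivWithin h (Ioi x) x :=
    hf.slope_le_rightDeriv trivial trivial (by linarith)
      (hf.differentiableWithinAt_Ioi_of_mem_interior (by simp))
  have hmid : derivWithin h (Ioi x) x ≤ derivWithin h (Iio x) x :=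
    hf.rightDeriv_le_leftDeriv_of_mem_interior (by simp)
  have hleft : derivWithin h (Iio x) x ≤ slope h (x - ε) x :=
    hf.leftDeriv_le_slope trivial trivial (by linarith)
      (hf.differentiableWithinAt_Iio_of_mem_interior (by simp))
  rw [slope_sub_const_mul_sq f M (by linarith)] at hright
  rw [slope_sub_const_mul_sq f M (by linarith)] at hleft
  rw [(hasDerivWithinAt_Ici_of_concaveOn_sub_sq hf x).derivWithin (uniqueDiffWithinAt_Ici x),
    (hasDerivWithinAt_Iic_of_concaveOn_sub_sq hf x).derivWithin (uniqueDiffWithinAt_Iic x)]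
  refine ⟨⟨?_, ?_⟩, ?_, ?_⟩ <;> linarith

end SemiconcaveOneSidedDeriv

theorem onesided_derivatives_tend_to_slope_general
    (M α : ℝ) (f g : ℝ → ℝ)
    (hconc : ConcaveOn ℝ Set.univ (fun B => f B - M * B ^ 2))
    (hg : ∀ ε ∈ Set.Ioo (-1 : ℝ) 1,
      Filter.Tendsto (fun β => g (β + ε) - g β) Filter.atTop (nhds 0))
    (hf : Filter.Tendsto (fun B => f B - (α * B + g B)) Filter.atTop (nhds 0)) :
    (∀ B : ℝ, DifferentiableWithinAt ℝ f (Set.Ici B) B ∧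
      DifferentiableWithinAt ℝ f (Set.Iic B) B) ∧
    Filter.Tendsto (fun B => derivWithin f (Set.Ici B) B) Filter.atTop (nhds α) ∧
    Filter.Tendsto (fun B => derivWithin f (Set.Iic B) B) Filter.atTop (nhds α) := by
  have hslope : ∀ ε ∈ Ioo (-1 : ℝ) 1, ε ≠ 0 →
      Tendsto (fun x => slope f x (x + ε)) atTop (𝓝 α) :=
    fun ε hε hε0 => tendsto_slope_add_atTop hε0 (hg ε hε) hf
  have hright : ∀ ε ∈ Ioo (0 : ℝ) 1, Tendsto (fun x => slope f x (x + ε)) atTop (𝓝 α) :=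
    fun ε hε => hslope ε ⟨by linarith [hε.1], hε.2⟩ hε.1.ne'
  have hleft : ∀ ε ∈ Ioo (0 : ℝ) 1, Tendsto (fun x => slope f (x - ε) x) atTop (𝓝 α) :=
    fun ε hε => (hslope (-ε) ⟨by linarith [hε.2], by linarith [hε.1]⟩
      (neg_ne_zero.2 hε.1.ne')).congr fun x => by rw [slope_comm, sub_eq_add_neg]
  refine ⟨fun B => ⟨(hasDerivWithinAt_Ici_of_concaveOn_sub_sq hconc B).differentiableWithinAt,
    (hasDerivWithinAt_Iic_of_concaveOn_sub_sq hconc B).differentiableWithinAt⟩, ?_, ?_⟩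
  · exact tendsto_of_squeeze_with_linear_error hright hleft fun ε hε x =>
      (oneSidedDeriv_mem_Icc_of_concaveOn_sub_sq hconc x hε.1).1
  · exact tendsto_of_squeeze_with_linear_error hright hleft fun ε hε x =>
      (oneSidedDeriv_mem_Icc_of_concaveOn_sub_sq hconc x hε.1).2

/-- If `f - M B²` is concave (so one-sided derivatives of `f` exist),
`g(β+ε) - g(β) → 0` for each fixed `ε ∈ (-1,1)`, and `f(B) - (αB + g(B)) → 0` as
`B → ∞`, then both one-sided derivatives of `f` tend to `α` at infinity. -/
theorem onesided_derivatives_tend_to_slope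
    (M α : ℝ) (f g : ℝ → ℝ) (hM : 0 ≤ M)
    (hconc : ConcaveOn ℝ Set.univ (fun B => f B - M * B ^ 2))
    (hg : ∀ ε ∈ Set.Ioo (-1 : ℝ) 1,
      Filter.Tendsto (fun β => g (β + ε) - g β) Filter.atTop (nhds 0))
    (hf : Filter.Tendsto (fun B => f B - (α * B + g B)) Filter.atTop (nhds 0)) :
    (∀ B : ℝ, DifferentiableWithinAt ℝ f (Set.Ici B) B ∧
      DifferentiableWithinAt ℝ f (Set.Iic B) B) ∧
    Filter.Tendsto (fun B => derivWithin f (Set.Ici B) B) Filter.atTop (nhds α) ∧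
    Filter.Tendsto (fun B => derivWithin f (Set.Iic B) B) Filter.atTop (nhds α) :=
  onesided_derivatives_tend_to_slope_general M α f g hconc hg hf
end
end

section
/- Let A₁, A₂ : ℝ² → ℝ be of class C¹ and let γ₀ ∈ ℝ. Define φ(s,t) = ∫₀ᵗ A₂(s,τ) dτ + ∫₀ˢ A₁(σ,0) dσ − s·γ₀. Then φ is differentiable, ∂φ/∂t (s,t) = A₂(s,t) for all (s,t), and the function Ā₁ := A₁ − ∂φ/∂s satisfies Ā₁(s,0) = γ₀ and Ā₁(s,t) = γ₀ − ∫₀ᵗ ( ∂A₂/∂s − ∂A₁/∂t )(s,τ) dτ for all (s,t). Moreover, if there are continuous functions k : ℝ → ℝ and w : ℝ² → ℝ such that ∂A₂/∂s (s,t) − ∂A₁/∂t (s,t) = (1 − t·k(s))·(1 + t·w(s,t)) for all (s,t), then Ā₁(s,t) = γ₀ − t + t²·k(s)/2 − ∫₀ᵗ τ·(1 − τ·k(s))·w(s,τ) dτ, and for t ≥ 0 one has |Ā₁(s,t) − (γ₀ − t + t²·k(s)/2)| ≤ t²·(1/2 + t·|k(s)|/3)·sup_{0≤τ≤t} |w(s,τ)|.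 -/
open MeasureTheory Filter Set Topology

noncomputable section

/-! Differentiating under the integral sign gives `∂ₛφ(s,t) = ∫₀ᵗ ∂ₛA₂(s,τ) dτ + A₁(s,0) - γ₀`
and `∂ₜφ = A₂`; writing `A₁(s,t) - A₁(s,0) = ∫₀ᵗ ∂ₜA₁(s,τ) dτ` then turns `Ā₁ = A₁ - ∂ₛφ` into
`γ₀ - ∫₀ᵗ curl A`. When the curl factorises, the integrand is `(1 - τk) + τ(1 - τk)w`: the first
part integrates to `t - t²k/2`, and the second is bounded by `(τ + τ²|k|) · sup |w|`. -/

section ParametricPrimitive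

variable {E : Type*} [NormedAddCommGroup E] [NormedSpace ℝ E] {A : ℝ × ℝ → E}

theorem DifferentiableAt.hasDerivAt_comp_prodMk_left {s t : ℝ}
    (hA : DifferentiableAt ℝ A (s, t)) :
    HasDerivAt (fun σ => A (σ, t)) (fderiv ℝ A (s, t) (1, 0)) s :=
  hA.hasFDerivAt.comp_hasDerivAt s ((hasDerivAt_id s).prodMk (hasDerivAt_const s t))

theorem DifferentiableAt.hasDerivAt_comp_prodMk_right {s t : ℝ}
    (hA : DifferentiableAt ℝ A (s, t)) :
    HasDerivAt (fun τ => A (s, τ)) (fderiv ℝ A (s, t) (0, 1)) t :=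
  hA.hasFDerivAt.comp_hasDerivAt t ((hasDerivAt_const t s).prodMk (hasDerivAt_id t))

theorem ContDiff.continuous_fderiv_apply_const (hA : ContDiff ℝ 1 A) (v : ℝ × ℝ) :
    Continuous fun p => fderiv ℝ A p v :=
  (hA.continuous_fderiv one_ne_zero).clm_apply continuous_const

theorem ContDiff.intervalIntegrable_fderiv_apply_slice (hA : ContDiff ℝ 1 A) (v : ℝ × ℝ)
    (s a b : ℝ) : IntervalIntegrable (fun τ => fderiv ℝ A (s, τ) v) volume a b :=
  ((hA.continuous_fderiv_apply_const v).comp (Continuous.prodMk_right s)).intervalIntegrable _ _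

theorem ContDiff.hasDerivAt_parametric_intervalIntegral (hA : ContDiff ℝ 1 A) (a b s₀ : ℝ) :
    HasDerivAt (fun s => ∫ τ in a..b, A (s, τ)) (∫ τ in a..b, fderiv ℝ A (s₀, τ) (1, 0)) s₀ := by
  have hA' : Continuous fun p => fderiv ℝ A p (1, 0) := hA.continuous_fderiv_apply_const _
  obtain ⟨M, hM⟩ := ((isCompact_closedBall s₀ 1).prod isCompact_uIcc).exists_bound_of_continuousOn
    hA'.continuousOn
  refine (intervalIntegral.hasDerivAt_integral_of_dominated_loc_of_deriv_le (μ := volume)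
    (F := fun s τ => A (s, τ)) (F' := fun s τ => fderiv ℝ A (s, τ) (1, 0))
    (Metric.ball_mem_nhds s₀ one_pos) (bound := fun _ => M) ?_ ?_ ?_ ?_
    intervalIntegrable_const ?_).2
  · exact Eventually.of_forall fun s =>
      (hA.continuous.comp (Continuous.prodMk_right s)).aestronglyMeasurable
  · exact (hA.continuous.comp (Continuous.prodMk_right s₀)).intervalIntegrable _ _
  · exact (hA'.comp (Continuous.prodMk_right s₀)).aestronglyMeasurable
  · exact Eventually.of_forall fun τ hτ s hs =>
      hM (s, τ) ⟨Metric.ball_subset_closedBall hs, uIoc_subset_uIcc hτ⟩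
  · exact Eventually.of_forall fun τ _ s _ =>
      (hA.differentiable one_ne_zero _).hasDerivAt_comp_prodMk_left

theorem ContDiff.hasStrictFDerivAt_parametric_primitive [CompleteSpace E] (hA : ContDiff ℝ 1 A)
    (a : ℝ) (p : ℝ × ℝ) :
    HasStrictFDerivAt (fun q : ℝ × ℝ => ∫ τ in a..q.2, A (q.1, τ))
      ((ContinuousLinearMap.toSpanSingleton ℝ (∫ τ in a..p.2, fderiv ℝ A (p.1, τ) (1, 0))).coprod
        (ContinuousLinearMap.toSpanSingleton ℝ (A p))) p := by
  have hA' : Continuous fun p => fderiv ℝ A p (1, 0) := hA.continuous_fderiv_apply_const _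
  refine hasStrictFDerivAt_uncurry_coprod (f := fun s t => ∫ τ in a..t, A (s, τ))
    (f₁ := fun s t =>
      ContinuousLinearMap.toSpanSingleton ℝ (∫ τ in a..t, fderiv ℝ A (s, τ) (1, 0)))
    (f₂ := fun s t => ContinuousLinearMap.toSpanSingleton ℝ (A (s, t)))
    (Eventually.of_forall fun q =>
      (hA.hasDerivAt_parametric_intervalIntegral a q.2 q.1).hasFDerivAt)
    (Eventually.of_forall fun q => ?_) ?_ ?_
  · exact ((hA.continuous.comp (Continuous.prodMk_right q.1)).integral_hasStrictDerivAt
      a q.2).hasDerivAt.hasFDerivAt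
  · exact (ContinuousLinearMap.toSpanSingletonCLE.continuous.comp
      (intervalIntegral.continuous_parametric_primitive_of_continuous
        (f := fun s τ => fderiv ℝ A (s, τ) (1, 0)) hA')).continuousAt
  · exact (ContinuousLinearMap.toSpanSingletonCLE.continuous.comp hA.continuous).continuousAt

end ParametricPrimitive

theorem integral_one_sub_mul_mul_one_add_mul (k t : ℝ) {w : ℝ → ℝ}
    (hw : IntervalIntegrable w volume 0 t) :
    ∫ τ in (0 : ℝ)..t, (1 - τ * k) * (1 + τ * w τ)
      = t - t ^ 2 * k / 2 + ∫ τ in (0 : ℝ)..t, τ * (1 - τ * k) * w τ := by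
  have hpoly : IntervalIntegrable (fun τ : ℝ => 1 - τ * k) volume 0 t :=
    (by fun_prop : Continuous fun τ : ℝ => 1 - τ * k).intervalIntegrable _ _
  have hrest : IntervalIntegrable (fun τ => τ * (1 - τ * k) * w τ) volume 0 t :=
    hw.continuousOn_mul (by fun_prop : Continuous fun τ : ℝ => τ * (1 - τ * k)).continuousOn
  calc ∫ τ in (0 : ℝ)..t, (1 - τ * k) * (1 + τ * w τ)
      = ∫ τ in (0 : ℝ)..t, ((1 - τ * k) + τ * (1 - τ * k) * w τ) :=
        intervalIntegral.integral_congr fun τ _ => by ring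
    _ = t - t ^ 2 * k / 2 + ∫ τ in (0 : ℝ)..t, τ * (1 - τ * k) * w τ := by
        rw [intervalIntegral.integral_add hpoly hrest, intervalIntegral.integral_sub
          intervalIntegrable_const
          ((by fun_prop : Continuous fun τ : ℝ => τ * k).intervalIntegrable _ _),
          intervalIntegral.integral_const, intervalIntegral.integral_mul_const, integral_id,
          smul_eq_mul]
        ring

theorem abs_integral_mul_one_sub_mul_mul_le (k : ℝ) {t : ℝ} (ht : 0 ≤ t) {w : ℝ → ℝ}
    (hw : ContinuousOn w (Icc 0 t)) :
    |∫ τ in (0 : ℝ)..t, τ * (1 - τ * k) * w τ|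
      ≤ t ^ 2 * (1 / 2 + t * |k| / 3) * sSup ((fun τ => |w τ|) '' Icc 0 t) := by
  set M := sSup ((fun τ => |w τ|) '' Icc 0 t)
  have hwM : ∀ τ ∈ Icc 0 t, |w τ| ≤ M := fun τ hτ =>
    le_csSup (isCompact_Icc.image_of_continuousOn hw.abs).bddAbove ⟨τ, hτ, rfl⟩
  have hpoint : ∀ τ ∈ Icc 0 t, |τ * (1 - τ * k) * w τ| ≤ M * τ + M * |k| * τ ^ 2 := by
    rintro τ ⟨hτ, hτt⟩
    have hk : |1 - τ * k| ≤ 1 + τ * |k| := by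
      simpa [abs_mul, abs_of_nonneg hτ] using abs_sub (1 : ℝ) (τ * k)
    calc |τ * (1 - τ * k) * w τ| = τ * |1 - τ * k| * |w τ| := by
          rw [abs_mul, abs_mul, abs_of_nonneg hτ]
      _ ≤ τ * (1 + τ * |k|) * M := by gcongr; exact hwM τ ⟨hτ, hτt⟩
      _ = M * τ + M * |k| * τ ^ 2 := by ring
  have hint : IntervalIntegrable (fun τ => |τ * (1 - τ * k) * w τ|) volume 0 t :=
    ((ContinuousOn.mul (by fun_prop) hw).abs).intervalIntegrable_of_Icc ht
  calc |∫ τ in (0 : ℝ)..t, τ * (1 - τ * k) * w τ|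
      ≤ ∫ τ in (0 : ℝ)..t, |τ * (1 - τ * k) * w τ| :=
        intervalIntegral.abs_integral_le_integral_abs ht
    _ ≤ ∫ τ in (0 : ℝ)..t, (M * τ + M * |k| * τ ^ 2) :=
        intervalIntegral.integral_mono_on ht hint
          ((by fun_prop : Continuous fun τ : ℝ => M * τ + M * |k| * τ ^ 2).intervalIntegrable _ _)
          hpoint
    _ = t ^ 2 * (1 / 2 + t * |k| / 3) * M := by
        rw [intervalIntegral.integral_add
          ((by fun_prop : Continuous fun τ : ℝ => M * τ).intervalIntegrable _ _)
          ((by fun_prop : Continuous fun τ : ℝ => M * |k| * τ ^ 2).intervalIntegrable _ _),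
          intervalIntegral.integral_const_mul, intervalIntegral.integral_const_mul, integral_id,
          integral_pow]
        ring

theorem hasFDerivAt_gauge {A₁ A₂ : ℝ × ℝ → ℝ} (hA₁ : Continuous A₁) (hA₂ : ContDiff ℝ 1 A₂)
    (γ₀ s t : ℝ) :
    ∃ L : ℝ × ℝ →L[ℝ] ℝ,
      HasFDerivAt (fun p : ℝ × ℝ => (∫ τ in (0 : ℝ)..p.2, A₂ (p.1, τ)) +
        (∫ σ in (0 : ℝ)..p.1, A₁ (σ, 0)) - p.1 * γ₀) L (s, t) ∧
      L (1, 0) = (∫ τ in (0 : ℝ)..t, fderiv ℝ A₂ (s, τ) (1, 0)) + (A₁ (s, 0) - γ₀) ∧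
      L (0, 1) = A₂ (s, t) := by
  have hbase : HasDerivAt (fun σ => (∫ σ' in (0 : ℝ)..σ, A₁ (σ', 0)) - σ * γ₀)
      (A₁ (s, 0) - γ₀) s :=
    ((hA₁.comp (Continuous.prodMk_left 0)).integral_hasStrictDerivAt 0 s).hasDerivAt.sub
      (hasDerivAt_mul_const γ₀)
  have hφ := (hA₂.hasStrictFDerivAt_parametric_primitive 0 (s, t)).hasFDerivAt.add
    (hbase.comp_hasFDerivAt (s, t) hasFDerivAt_fst)
  refine ⟨_, hφ.congr_of_eventuallyEq (Eventually.of_forall fun p => ?_), by simp, by simp⟩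
  simp only [Pi.add_apply, Function.comp_apply]
  ring

/-- The gauge-choice computation in boundary coordinates: with
`φ(s,t) = ∫₀ᵗ A₂(s,τ)dτ + ∫₀ˢ A₁(σ,0)dσ - sγ₀`, one has `∂φ/∂t = A₂`,
`Ā₁ := A₁ - ∂φ/∂s` satisfies `Ā₁(s,0) = γ₀`,
`Ā₁(s,t) = γ₀ - ∫₀ᵗ (∂ₛA₂ - ∂ₜA₁)(s,τ)dτ`, and if
`∂ₛA₂ - ∂ₜA₁ = (1 - t k(s))(1 + t w(s,t))` then the explicit expansion and
remainder bound hold. -/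
theorem gauge_choice_boundary_coordinates
    (A₁ A₂ : SC.Plane → ℝ) (hA₁ : ContDiff ℝ 1 A₁) (hA₂ : ContDiff ℝ 1 A₂)
    (γ₀ : ℝ) (φ : SC.Plane → ℝ)
    (hφ : φ = fun p => (∫ τ in (0 : ℝ)..p.2, A₂ (p.1, τ)) +
      (∫ σ in (0 : ℝ)..p.1, A₁ (σ, 0)) - p.1 * γ₀)
    (Abar : SC.Plane → ℝ)
    (hAbar : Abar = fun p => A₁ p - fderiv ℝ φ p ((1 : ℝ), (0 : ℝ))) :
    Differentiable ℝ φ ∧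
    (∀ s t : ℝ, fderiv ℝ φ (s, t) ((0 : ℝ), (1 : ℝ)) = A₂ (s, t)) ∧
    (∀ s : ℝ, Abar (s, 0) = γ₀) ∧
    (∀ s t : ℝ, Abar (s, t) = γ₀ - ∫ τ in (0 : ℝ)..t,
        (fderiv ℝ A₂ (s, τ) ((1 : ℝ), (0 : ℝ)) -
         fderiv ℝ A₁ (s, τ) ((0 : ℝ), (1 : ℝ)))) ∧
    (∀ k : ℝ → ℝ, ∀ w : SC.Plane → ℝ, Continuous k → Continuous w →
      (∀ s t : ℝ, fderiv ℝ A₂ (s, t) ((1 : ℝ), (0 : ℝ)) -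
          fderiv ℝ A₁ (s, t) ((0 : ℝ), (1 : ℝ))
            = (1 - t * k s) * (1 + t * w (s, t))) →
      (∀ s t : ℝ, Abar (s, t) = γ₀ - t + t ^ 2 * k s / 2
          - ∫ τ in (0 : ℝ)..t, τ * (1 - τ * k s) * w (s, τ)) ∧
      (∀ s : ℝ, ∀ t : ℝ, 0 ≤ t →
        |Abar (s, t) - (γ₀ - t + t ^ 2 * k s / 2)|
          ≤ t ^ 2 * (1 / 2 + t * |k s| / 3) *
              sSup ((fun τ => |w (s, τ)|) '' Set.Icc 0 t))) := by
  subst hφ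
  have hdφ := hasFDerivAt_gauge hA₁.continuous hA₂ γ₀
  have hA₁_ftc (s t : ℝ) :
      ∫ τ in (0 : ℝ)..t, fderiv ℝ A₁ (s, τ) (0, 1) = A₁ (s, t) - A₁ (s, 0) :=
    intervalIntegral.integral_eq_sub_of_hasDerivAt
      (fun τ _ => (hA₁.differentiable one_ne_zero _).hasDerivAt_comp_prodMk_right)
      (hA₁.intervalIntegrable_fderiv_apply_slice _ s 0 t)
  have hAbar_curl (s t : ℝ) : Abar (s, t) = γ₀ - ∫ τ in (0 : ℝ)..t,
      (fderiv ℝ A₂ (s, τ) (1, 0) - fderiv ℝ A₁ (s, τ) (0, 1)) := by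
    obtain ⟨L, hL, hL₁, -⟩ := hdφ s t
    rw [hAbar]
    dsimp only
    rw [hL.fderiv, hL₁, intervalIntegral.integral_sub
      (hA₂.intervalIntegrable_fderiv_apply_slice _ s 0 t)
      (hA₁.intervalIntegrable_fderiv_apply_slice _ s 0 t), hA₁_ftc]
    ring
  refine ⟨fun p => (hdφ p.1 p.2).choose_spec.1.differentiableAt, fun s t => ?_,
    fun s => by simp [hAbar_curl], hAbar_curl, fun k w _ hw hcurl => ?_⟩
  · obtain ⟨L, hL, -, hL₂⟩ := hdφ s t
    rw [hL.fderiv, hL₂]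
  have hw_slice (s : ℝ) : Continuous fun τ => w (s, τ) := hw.comp (Continuous.prodMk_right s)
  have hAbar_expansion (s t : ℝ) : Abar (s, t) = γ₀ - t + t ^ 2 * k s / 2
      - ∫ τ in (0 : ℝ)..t, τ * (1 - τ * k s) * w (s, τ) := by
    rw [hAbar_curl, intervalIntegral.integral_congr fun τ _ => hcurl s τ,
      integral_one_sub_mul_mul_one_add_mul _ _ ((hw_slice s).intervalIntegrable _ _)]
    ring
  refine ⟨hAbar_expansion, fun s t ht => ?_⟩
  rw [hAbar_expansion, sub_sub_cancel_left, abs_neg]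
  exact abs_integral_mul_one_sub_mul_mul_le _ ht (hw_slice s).continuousOn
end
end
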